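/- arXiv:1712.05957 — 5 statements merged into one kernel-verified Lean document; each statement's English description precedes it below -/
import Mathlib

section
/- Let K_R, K_T, τ be natural numbers with 1 ≤ τ ≤ K_R and τ < K_T, let j ∈ Fin K_R and let π be a permutation of Fin K_T. Work in the multivariate polynomial ring ℂ[X_{r,c} : r ∈ Fin K_R, c ∈ Fin K_T]. Fix k ∈ Fin K_R with k ∉ {j+1, …, j+τ−1} (row indices modulo K_R). For i ∈ Fin K_T let M_{k,i} denote the determinant of the τ×τ matrix of indeterminates whose rows are the rows j+1, …, j+τ−1 (mod K_R) followed by row k, and whose columns are π(i), π(i+1), …, π(i+τ−1) (indices modulo K_T). Then the K_T polynomials M_{k,0}, M_{k,1}, …, M_{k,K_T−1} are linearly independent over ℂ. -/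
/-!
The minor `M_{k,i}` contains the product of its diagonal entries `∏_p X_{r_p, π(i+p)}`.
Evaluate all minors at the point that is `1` on these `τ` entries and `0` elsewhere. Since the
rows `r_p` are distinct, `M_{k,i}` becomes the identity determinant `1`. For `i' ≠ i`, the cyclic
column window of `M_{k,i'}` leaves that of `M_{k,i}` (windows have length `τ < K_T`), so `M_{k,i'}`
becomes a determinant with a zero column. The evaluations are thus biorthogonal to the minors.
-/

/-- The τ×τ channel minor `M_{k,i}` as a polynomial in independent indeterminates
`X_{r,c}` (`r` a receiver, `c` a transmitter): its rows are the rows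
`j+1, …, j+τ-1` (mod `K_R`) of the matrix of indeterminates followed by row `k`, and its
columns are `π(i), π(i+1), …, π(i+τ-1)` (arguments mod `K_T`). -/
noncomputable def channelMinor (K_R K_T τ : ℕ) (j : Fin K_R) (π : Equiv.Perm (Fin K_T))
    (k : Fin K_R) (i : Fin K_T) : MvPolynomial (Fin K_R × Fin K_T) ℂ :=
  Matrix.det (Matrix.of fun p q : Fin τ =>
    MvPolynomial.X
      ((if _ : (p : ℕ) < τ - 1 then
          (⟨((j : ℕ) + (p : ℕ) + 1) % K_R, Nat.mod_lt _ j.pos⟩ : Fin K_R)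
        else k),
       π ⟨((i : ℕ) + (q : ℕ)) % K_T, Nat.mod_lt _ i.pos⟩))

open MvPolynomial

theorem linearIndependent_of_biorthogonal {ι R M : Type*} [Semiring R] [AddCommMonoid M]
    [Module R M] [DecidableEq ι] {v : ι → M} (f : ι → M →ₗ[R] R)
    (h : ∀ i i', f i (v i') = if i = i' then 1 else 0) : LinearIndependent R v := by
  have hfv : ⇑(LinearMap.pi f) ∘ v = fun i' => Pi.single i' 1 := by
    ext i' i
    simp [h, Pi.single_apply, eq_comm]
  exact .of_comp (LinearMap.pi f) (hfv ▸ Pi.linearIndependent_single_one ι R)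

namespace MvPolynomial

variable {n α β R : Type*} [Fintype n] [DecidableEq n] [CommRing R]

noncomputable def genericMinor (r : n → α) (c : n → β) : MvPolynomial (α × β) R :=
  (Matrix.of fun p q => X (r p, c q)).det

noncomputable def minorDiagonalPoint (r : n → α) (c : n → β) : α × β → R :=
  (Set.range fun p => (r p, c p)).indicator 1

theorem eval_genericMinor (x : α × β → R) (r : n → α) (c : n → β) :
    eval x (genericMinor r c) = (Matrix.of fun p q => x (r p, c q)).det := by
  rw [genericMinor, RingHom.map_det]
  congr 1
  ext p q
  simp

theorem eval_minorDiagonalPoint_genericMinor_self {r : n → α} {c : n → β}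
    (hr : Function.Injective r) (hc : Function.Injective c) :
    eval (minorDiagonalPoint r c) (genericMinor r c : MvPolynomial (α × β) R) = 1 := by
  rw [eval_genericMinor]
  convert Matrix.det_one (n := n) (R := R)
  ext p q
  rw [Matrix.of_apply, Matrix.one_apply, minorDiagonalPoint]
  by_cases hpq : p = q
  · rw [if_pos hpq, hpq]
    exact Set.indicator_of_mem (Set.mem_range_self q) _
  · rw [if_neg hpq]
    refine Set.indicator_of_notMem ?_ _
    rintro ⟨p', hp'⟩
    rw [Prod.mk.injEq] at hp'
    exact hpq ((hr hp'.1).symm.trans (hc hp'.2))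

theorem eval_minorDiagonalPoint_genericMinor_of_notMem_range {r : n → α} {c c' : n → β}
    (q : n) (hq : c' q ∉ Set.range c) :
    eval (minorDiagonalPoint r c) (genericMinor r c' : MvPolynomial (α × β) R) = 0 := by
  rw [eval_genericMinor]
  refine Matrix.det_eq_zero_of_column_eq_zero q fun p => ?_
  simp only [Matrix.of_apply, minorDiagonalPoint]
  exact Set.indicator_of_notMem (by rintro ⟨p', hp'⟩; exact hq ⟨p', congrArg Prod.snd hp'⟩) _

end MvPolynomial

theorem Nat.eq_of_add_mod_eq_add_mod {n a u v : ℕ} (hu : u < n) (hv : v < n)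
    (h : (a + u) % n = (a + v) % n) : u = v :=
  (Nat.ModEq.add_left_cancel' a h).eq_of_lt_of_lt hu hv

def cyclicWindow {n : ℕ} (τ : ℕ) (i : Fin n) (q : Fin τ) : Fin n :=
  ⟨((i : ℕ) + (q : ℕ)) % n, Nat.mod_lt _ i.pos⟩

theorem cyclicWindow_injective {n τ : ℕ} (hτ : τ ≤ n) (i : Fin n) :
    Function.Injective (cyclicWindow τ i) := fun q q' h =>
  Fin.ext <| Nat.eq_of_add_mod_eq_add_mod (by omega) (by omega) (congrArg Fin.val h)

theorem exists_cyclicWindow_notMem_range {n τ : ℕ} (hτ : 0 < τ) (hτn : τ < n)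
    {i i' : Fin n} (hne : i ≠ i') :
    ∃ q, cyclicWindow τ i' q ∉ Set.range (cyclicWindow τ i) := by
  by_contra! hsub
  obtain ⟨p₀, hp₀⟩ := hsub ⟨0, hτ⟩
  have hi' : ((i : ℕ) + p₀) % n = i' := by
    simpa [cyclicWindow, Nat.mod_eq_of_lt i'.isLt] using congrArg Fin.val hp₀
  have hp₀_pos : 0 < (p₀ : ℕ) := by
    refine Nat.pos_of_ne_zero fun h0 => hne (Fin.ext ?_)
    rwa [h0, Nat.add_zero, Nat.mod_eq_of_lt i.isLt] at hi'
  -- The window at `i' = i + p₀` reaches `i + τ`, which lies outside the window at `i`.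
  obtain ⟨p, hp⟩ := hsub ⟨τ - p₀, by omega⟩
  have hpτ : ((i : ℕ) + p) % n = ((i : ℕ) + τ) % n := by
    have := congrArg Fin.val hp
    simp only [cyclicWindow] at this
    rw [this, ← hi', Nat.mod_add_mod, Nat.add_assoc, Nat.add_sub_cancel' (by omega)]
  have := Nat.eq_of_add_mod_eq_add_mod (by omega) hτn hpτ
  omega

def channelRows (K_R τ : ℕ) (j k : Fin K_R) (p : Fin τ) : Fin K_R :=
  if (p : ℕ) < τ - 1 then ⟨((j : ℕ) + (p : ℕ) + 1) % K_R, Nat.mod_lt _ j.pos⟩ else k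

theorem channelRows_injective {K_R τ : ℕ} (hτR : τ ≤ K_R) (j k : Fin K_R)
    (hk : ∀ t : ℕ, t < τ - 1 → (k : ℕ) ≠ ((j : ℕ) + t + 1) % K_R) :
    Function.Injective (channelRows K_R τ j k) := by
  intro p p' h
  unfold channelRows at h
  split_ifs at h with hp hp' hp'
  · have hval : ((j : ℕ) + (p + 1)) % K_R = ((j : ℕ) + (p' + 1)) % K_R := by
      simpa [Nat.add_assoc] using congrArg Fin.val h
    have := Nat.eq_of_add_mod_eq_add_mod (by omega) (by omega) hval
    exact Fin.ext (by omega)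
  · exact (hk _ hp (congrArg Fin.val h).symm).elim
  · exact (hk _ hp' (congrArg Fin.val h)).elim
  · exact Fin.ext (by omega)

/-- inner claim of Lemma 2, eq. (25): for a fixed admissible row `k`
(not among `j+1, …, j+τ-1` mod `K_R`), the `K_T` sliding-window channel minors
`M_{k,0}, …, M_{k,K_T-1}` are linearly independent over `ℂ`. -/
theorem channelMinors_fixed_receiver_linearIndependent
    (K_R K_T τ : ℕ) (hτ1 : 1 ≤ τ) (hτR : τ ≤ K_R) (hτT : τ < K_T)
    (j : Fin K_R) (π : Equiv.Perm (Fin K_T))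
    (k : Fin K_R) (hk : ∀ t : ℕ, t < τ - 1 → (k : ℕ) ≠ ((j : ℕ) + t + 1) % K_R) :
    LinearIndependent ℂ (fun i : Fin K_T => channelMinor K_R K_T τ j π k i) := by
  let rows := channelRows K_R τ j k
  let cols (i : Fin K_T) := π ∘ cyclicWindow τ i
  refine linearIndependent_of_biorthogonal
    (fun i => (aeval (minorDiagonalPoint rows (cols i))).toLinearMap) fun i i' => ?_
  change eval (minorDiagonalPoint rows (cols i)) (genericMinor rows (cols i')) = _
  split_ifs with hii'
  · subst hii'
    exact eval_minorDiagonalPoint_genericMinor_self (channelRows_injective hτR j k hk)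
      (π.injective.comp (cyclicWindow_injective hτT.le i))
  · obtain ⟨q, hq⟩ := exists_cyclicWindow_notMem_range hτ1 hτT hii'
    exact eval_minorDiagonalPoint_genericMinor_of_notMem_range q
      fun ⟨p, hp⟩ => hq ⟨p, π.injective hp⟩
end

section
/- Let K_R, K_T, τ be natural numbers with 1 ≤ τ ≤ K_R and τ < K_T, let j ∈ Fin K_R and let π be a permutation of Fin K_T. Work in the multivariate polynomial ring ℂ[X_{r,c} : r ∈ Fin K_R, c ∈ Fin K_T]. For i ∈ Fin K_T and k ∈ Fin K_R with k ∉ {j+1, …, j+τ−1} (row indices modulo K_R), let M_{k,i} denote the determinant of the τ×τ matrix of indeterminates whose rows are the rows j+1, …, j+τ−1 (mod K_R) followed by row k, and whose columns are π(i), π(i+1), …, π(i+τ−1) (indices modulo K_T). Then the whole family of K_T·(K_R−τ+1) polynomials (M_{k,i}), ranging over all admissible k and all i ∈ Fin K_T, is linearly independent over ℂ. -/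
open MvPolynomial

theorem LinearIndependent.of_biorthogonal {ι R M : Type*} [Semiring R] [AddCommMonoid M]
    [Module R M] [DecidableEq ι] {v : ι → M} (f : ι → M →ₗ[R] R)
    (h : ∀ i j, f i (v j) = if i = j then 1 else 0) : LinearIndependent R v := by
  rw [linearIndependent_iff'ₛ]
  intro s a b hab i hi
  simpa [h, hi] using congr_arg (f i) hab

theorem Finsupp.sum_single_one_apply_ne_zero {ι α : Type*} [Fintype ι] (f : ι → α) (q : ι) :
    (∑ q', Finsupp.single (f q') 1 : α →₀ ℕ) (f q) ≠ 0 := by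
  rw [Finsupp.finsetSum_apply]
  exact (Finset.sum_pos' (fun _ _ => Nat.zero_le _) ⟨q, Finset.mem_univ q, by simp⟩).ne'

theorem MvPolynomial.prod_X_eq_monomial {σ ι R : Type*} [CommSemiring R] (s : Finset ι)
    (f : ι → σ) :
    ∏ q ∈ s, (X (f q) : MvPolynomial σ R) = monomial (∑ q ∈ s, Finsupp.single (f q) 1) 1 := by
  rw [monomial_sum_one]
  rfl

namespace Matrix

variable {n α β R : Type*} [Fintype n] [DecidableEq n] [CommRing R]

theorem coeff_det_mvPolynomialX_diagonal :
    (mvPolynomialX n n R).det.coeff (∑ q, Finsupp.single (q, q) 1) = 1 := by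
  rw [det_apply, coeff_sum, Finset.sum_eq_single 1]
  · simp [mvPolynomialX, prod_X_eq_monomial]
  · intro σ _ hσ
    obtain ⟨q, hq⟩ : ∃ q, σ q ≠ q := by
      by_contra! h
      exact hσ (Equiv.ext h)
    have hne : ∑ q, Finsupp.single (σ q, q) 1 ≠ ∑ q, Finsupp.single (q, q) 1 := by
      intro h
      apply Finsupp.sum_single_one_apply_ne_zero (fun q => (σ q, q)) q
      rw [h, Finsupp.finsetSum_apply]
      exact Finset.sum_eq_zero fun q' _ => Finsupp.single_eq_of_ne (by grind)
    simp [mvPolynomialX, prod_X_eq_monomial, coeff_monomial, hne]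
  · simp

theorem det_of_X_eq_rename (r : n → α) (c : n → β) :
    (of fun p q => (X (r p, c q) : MvPolynomial (α × β) R)).det
      = rename (Prod.map r c) (mvPolynomialX n n R).det := by
  rw [AlgHom.map_det]
  congr 1
  ext p q
  simp [mvPolynomialX]

theorem coeff_det_of_X_diagonal {r : n → α} {c : n → β} (hr : r.Injective) (hc : c.Injective) :
    (of fun p q => (X (r p, c q) : MvPolynomial (α × β) R)).det.coeff
      (∑ q, Finsupp.single (r q, c q) 1) = 1 := by
  rw [det_of_X_eq_rename, ← coeff_det_mvPolynomialX_diagonal (n := n) (R := R),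
    ← coeff_rename_mapDomain _ (hr.prodMap hc)]
  simp [Finsupp.mapDomain_finsetSum]

theorem mem_range_of_mem_vars_det_of_X {r : n → α} {c : n → β} {x : α × β}
    (hx : x ∈ (of fun p q => (X (r p, c q) : MvPolynomial (α × β) R)).det.vars) :
    x.1 ∈ Set.range r ∧ x.2 ∈ Set.range c := by
  rw [det_of_X_eq_rename] at hx
  obtain ⟨⟨p, q⟩, -, rfl⟩ := mem_vars_rename _ _ hx
  exact ⟨⟨p, rfl⟩, ⟨q, rfl⟩⟩

end Matrix

theorem Nat.eq_of_add_mod_eq_add_mod_s4 {n a b c : ℕ} (ha : a < n) (hb : b < n)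
    (h : (c + a) % n = (c + b) % n) : a = b :=
  (Nat.ModEq.add_left_cancel' c h).eq_of_lt_of_lt ha hb

theorem Nat.eq_of_cyclic_window_subset {n τ i i' : ℕ} (hτ0 : 0 < τ) (hτn : τ < n)
    (hi : i < n) (hi' : i' < n) (h : ∀ a < τ, ∃ b < τ, (i + a) % n = (i' + b) % n) :
    i = i' := by
  obtain ⟨b, hb, hib⟩ := h 0 hτ0
  rw [Nat.add_zero, Nat.mod_eq_of_lt hi] at hib
  obtain rfl | hb0 := Nat.eq_zero_or_pos b
  · rwa [Nat.add_zero, Nat.mod_eq_of_lt hi'] at hib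
  -- `i + (τ - b) ≡ i' + τ`, and `i' + τ` lies outside the window of `i'`
  obtain ⟨c, hc, hic⟩ := h (τ - b) (by omega)
  have : (i' + τ) % n = (i' + c) % n := by
    rw [← hic, hib, Nat.mod_add_mod, Nat.add_assoc, Nat.add_sub_cancel' hb.le]
  have := Nat.eq_of_add_mod_eq_add_mod_s4 hτn (by omega) this
  omega

def minorRows (K_R τ : ℕ) (j k : Fin K_R) (p : Fin τ) : Fin K_R :=
  if _ : (p : ℕ) < τ - 1 then ⟨((j : ℕ) + (p : ℕ) + 1) % K_R, Nat.mod_lt _ j.pos⟩ else k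

def minorCols (K_T τ : ℕ) (π : Equiv.Perm (Fin K_T)) (i : Fin K_T) (q : Fin τ) : Fin K_T :=
  π ⟨((i : ℕ) + (q : ℕ)) % K_T, Nat.mod_lt _ i.pos⟩

section ChannelMinor

variable {K_R K_T τ : ℕ}

theorem minorRows_injective (hτR : τ ≤ K_R) {j k : Fin K_R}
    (hk : ∀ t < τ - 1, (k : ℕ) ≠ ((j : ℕ) + t + 1) % K_R) :
    (minorRows K_R τ j k).Injective := by
  intro p p' h
  unfold minorRows at h
  split_ifs at h with hp hp' hp'
  · have := Nat.eq_of_add_mod_eq_add_mod_s4 (n := K_R) (c := j) (a := p + 1) (b := p' + 1)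
      (by omega) (by omega) (by simpa only [Nat.add_assoc] using congr_arg Fin.val h)
    exact Fin.ext (by omega)
  · exact absurd (congr_arg Fin.val h).symm (hk p hp)
  · exact absurd (congr_arg Fin.val h) (hk p' hp')
  · exact Fin.ext (by omega)

theorem eq_of_mem_range_minorRows {j k k₀ : Fin K_R}
    (hk₀ : ∀ t < τ - 1, (k₀ : ℕ) ≠ ((j : ℕ) + t + 1) % K_R)
    (h : k₀ ∈ Set.range (minorRows K_R τ j k)) : k₀ = k := by
  obtain ⟨p, hp⟩ := h
  unfold minorRows at hp
  split_ifs at hp with hpτ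
  · exact absurd (congr_arg Fin.val hp).symm (hk₀ p hpτ)
  · exact hp.symm

theorem minorCols_injective (hτT : τ ≤ K_T) (π : Equiv.Perm (Fin K_T)) (i : Fin K_T) :
    (minorCols K_T τ π i).Injective := fun q q' h =>
  Fin.ext <| Nat.eq_of_add_mod_eq_add_mod_s4 (by omega) (by omega)
    (congr_arg Fin.val (π.injective h))

theorem eq_of_range_minorCols_subset (hτ1 : 1 ≤ τ) (hτT : τ < K_T) {π : Equiv.Perm (Fin K_T)}
    {i i' : Fin K_T} (h : Set.range (minorCols K_T τ π i) ⊆ Set.range (minorCols K_T τ π i')) :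
    i = i' := by
  refine Fin.ext <| Nat.eq_of_cyclic_window_subset hτ1 hτT i.isLt i'.isLt fun a ha => ?_
  obtain ⟨b, hb⟩ := h ⟨⟨a, ha⟩, rfl⟩
  exact ⟨b, b.isLt, (congr_arg Fin.val (π.injective hb)).symm⟩


theorem eq_of_coeff_channelMinor_ne_zero (hτ1 : 1 ≤ τ) (hτT : τ < K_T) {j k k₀ : Fin K_R}
    {π : Equiv.Perm (Fin K_T)} {i i₀ : Fin K_T}
    (hk₀ : ∀ t < τ - 1, (k₀ : ℕ) ≠ ((j : ℕ) + t + 1) % K_R)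
    (h : (channelMinor K_R K_T τ j π k i).coeff
      (∑ q, Finsupp.single (minorRows K_R τ j k₀ q, minorCols K_T τ π i₀ q) 1) ≠ 0) :
    k₀ = k ∧ i₀ = i := by
  have hvars : ∀ q, (minorRows K_R τ j k₀ q, minorCols K_T τ π i₀ q)
      ∈ (channelMinor K_R K_T τ j π k i).vars := fun q =>
    (mem_vars_iff_mem_support _).2 ⟨_, mem_support_iff.2 h,
      Finsupp.mem_support_iff.2 (Finsupp.sum_single_one_apply_ne_zero _ q)⟩
  have hrange q := Matrix.mem_range_of_mem_vars_det_of_X (hvars q)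
  have hlast : minorRows K_R τ j k₀ ⟨τ - 1, by omega⟩ = k₀ := dif_neg (lt_irrefl _)
  refine ⟨eq_of_mem_range_minorRows hk₀ (hlast ▸ (hrange _).1), ?_⟩
  exact eq_of_range_minorCols_subset hτ1 hτT (Set.range_subset_iff.2 fun q => (hrange q).2)

end ChannelMinor

/-- degree-one case of Lemma 2: the whole family of `K_T·(K_R-τ+1)`
channel minors `M_{k,i}`, ranging over all admissible rows `k` (not among
`j+1, …, j+τ-1` mod `K_R`) and all `i ∈ Fin K_T`, is linearly independent over `ℂ`. -/
theorem channelMinors_linearIndependent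
    (K_R K_T τ : ℕ) (hτ1 : 1 ≤ τ) (hτR : τ ≤ K_R) (hτT : τ < K_T)
    (j : Fin K_R) (π : Equiv.Perm (Fin K_T)) :
    LinearIndependent ℂ
      (fun p : {k : Fin K_R //
          ∀ t : ℕ, t < τ - 1 → (k : ℕ) ≠ ((j : ℕ) + t + 1) % K_R} × Fin K_T =>
        channelMinor K_R K_T τ j π p.1.val p.2) := by
  classical
  refine LinearIndependent.of_biorthogonal (fun p => lcoeff ℂ
    (∑ q, Finsupp.single (minorRows K_R τ j p.1 q, minorCols K_T τ π p.2 q) 1)) fun p₀ p => ?_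
  rw [lcoeff_apply]
  split_ifs with h
  · subst h
    exact Matrix.coeff_det_of_X_diagonal (minorRows_injective hτR p₀.1.2)
      (minorCols_injective hτT.le π _)
  · by_contra hne
    obtain ⟨hk, hi⟩ := eq_of_coeff_channelMinor_ne_zero hτ1 hτT p₀.1.2 hne
    exact h (Prod.ext (Subtype.ext hk) hi)
end

section
/- Let K_T, K_R, τ be natural numbers with 1 ≤ τ < min{K_T, K_R}. Then, in ℚ, K_T·K_R/(K_T+K_R−τ) > τ. -/
/-- in ℚ, `K_T·K_R/(K_T+K_R−τ) > τ` whenever `1 ≤ τ < min{K_T, K_R}`. -/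
theorem proposed_beats_zero_forcing (K_T K_R τ : ℕ)
    (hτ1 : 1 ≤ τ) (hτ : τ < min K_T K_R) :
    (τ : ℚ) < (K_T : ℚ) * K_R / ((K_T : ℚ) + K_R - τ) := by
  have h1 : (τ : ℚ) < K_T := by exact_mod_cast lt_of_lt_of_le hτ (min_le_left _ _)
  have h2 : (τ : ℚ) < K_R := by exact_mod_cast lt_of_lt_of_le hτ (min_le_right _ _)
  have hd : (0:ℚ) < (K_T : ℚ) + K_R - τ := by linarith
  rw [lt_div_iff₀ hd]
  nlinarith [mul_pos (sub_pos.mpr h1) (sub_pos.mpr h2)]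
end

section
/- Let K_T, K_R, τ, τ' be natural numbers with 1 ≤ τ' ≤ τ ≤ min{K_T, K_R}. Then, in ℚ, τ'·C(K_T,τ')·K_R / ( τ'·C(K_T,τ') + (K_R−τ')·C(K_T,τ'−1) ) ≤ K_T·K_R/(K_T+K_R−τ). -/
/-- in ℚ, for `1 ≤ τ' ≤ τ ≤ min{K_T,K_R}`,
`τ'·C(K_T,τ')·K_R / (τ'·C(K_T,τ') + (K_R−τ')·C(K_T,τ'−1)) ≤ K_T·K_R/(K_T+K_R−τ)`. -/
theorem proposed_dominates_scheme27 (K_T K_R τ τ' : ℕ)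
    (h1 : 1 ≤ τ') (h2 : τ' ≤ τ) (h3 : τ ≤ min K_T K_R) :
    (τ' : ℚ) * (K_T.choose τ') * K_R /
        ((τ' : ℚ) * (K_T.choose τ') + ((K_R : ℚ) - τ') * (K_T.choose (τ' - 1))) ≤
      (K_T : ℚ) * K_R / ((K_T : ℚ) + K_R - τ) := by
  have hτT : τ ≤ K_T := le_trans h3 (min_le_left _ _)
  have hτR : τ ≤ K_R := le_trans h3 (min_le_right _ _)
  have hT : τ' ≤ K_T := le_trans h2 hτT
  have hR : τ' ≤ K_R := le_trans h2 hτR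
  have hsub : τ' - 1 ≤ K_T := le_trans (Nat.sub_le _ _) hT
  have hcpos : 0 < K_T.choose (τ' - 1) := Nat.choose_pos hsub
  have hid : K_T.choose τ' * τ' = K_T.choose (τ' - 1) * (K_T - (τ' - 1)) := by
    have := Nat.choose_succ_right_eq K_T (τ' - 1)
    rwa [Nat.sub_add_cancel h1] at this
  have hidQ : (τ' : ℚ) * (K_T.choose τ') =
      ((K_T : ℚ) - τ' + 1) * (K_T.choose (τ' - 1)) := by
    have h := congrArg (Nat.cast : ℕ → ℚ) hid
    push_cast [Nat.cast_sub hsub, Nat.cast_sub h1] at h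
    linarith
  -- cast facts
  have hp1 : (1 : ℚ) ≤ (τ' : ℚ) := by exact_mod_cast h1
  have hpq : (τ' : ℚ) ≤ (τ : ℚ) := by exact_mod_cast h2
  have hqt : (τ : ℚ) ≤ (K_T : ℚ) := by exact_mod_cast hτT
  have hqr : (τ : ℚ) ≤ (K_R : ℚ) := by exact_mod_cast hτR
  have hc1 : (1 : ℚ) ≤ (K_T.choose (τ' - 1) : ℚ) := by exact_mod_cast hcpos
  have hD1 : (0 : ℚ) < (τ' : ℚ) * (K_T.choose τ') +
      ((K_R : ℚ) - τ') * (K_T.choose (τ' - 1)) := by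
    rw [hidQ]
    have : ((K_T : ℚ) - τ' + 1) * (K_T.choose (τ' - 1)) +
        ((K_R : ℚ) - τ') * (K_T.choose (τ' - 1)) =
        ((K_T : ℚ) + K_R - 2 * τ' + 1) * (K_T.choose (τ' - 1)) := by ring
    rw [this]
    have h2p : (2 : ℚ) * τ' ≤ (K_T : ℚ) + K_R := by
      have hpT : (τ' : ℚ) ≤ (K_T : ℚ) := le_trans hpq hqt
      have hpR : (τ' : ℚ) ≤ (K_R : ℚ) := le_trans hpq hqr
      linarith
    nlinarith
  have hD2 : (0 : ℚ) < (K_T : ℚ) + K_R - τ := by linarith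
  rw [div_le_div_iff₀ hD1 hD2]
  have hkey : (0 : ℚ) ≤ (K_T.choose (τ' - 1) : ℚ) * (K_R : ℚ) *
      ((K_T : ℚ) * ((τ : ℚ) - τ') + ((τ' : ℚ) - 1) * ((K_R : ℚ) - τ)) := by
    have h0c : (0 : ℚ) ≤ (K_T.choose (τ' - 1) : ℚ) := by linarith
    have h0r : (0 : ℚ) ≤ (K_R : ℚ) := by positivity
    apply mul_nonneg (mul_nonneg h0c h0r)
    have hKT : (0 : ℚ) ≤ (K_T : ℚ) := by positivity
    nlinarith
  rw [hidQ]
  nlinarith [hkey]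
end

section
/- Let K_R ≥ 2 and K_T be natural numbers, set τ = K_R − 1, and assume K_T ≥ τ. Then, in ℚ, the minimum over σ ∈ {τ, τ+1, …, min{K_T, K_R}} of τ·C(K_T,τ)·K_R / ( τ·C(K_T,τ) + (K_R−σ)·C(σ−1,τ−1) ) equals τ·C(K_T,τ)·K_R / ( τ·C(K_T,τ) + 1 ). -/
/-- evaluating the Theorem 2 bound at cooperation order `τ = K_R−1`:
the minimum over `σ ∈ {τ, …, min{K_T,K_R}}` of
`τ·C(K_T,τ)·K_R / (τ·C(K_T,τ) + (K_R−σ)·C(σ−1,τ−1))` equals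
`τ·C(K_T,τ)·K_R / (τ·C(K_T,τ) + 1)`. -/
theorem theorem2_bound_at_KR_sub_one (K_T K_R : ℕ) (hR : 2 ≤ K_R)
    (τ : ℕ) (hτ : τ = K_R - 1) (hT : τ ≤ K_T) :
    (Finset.Icc τ (min K_T K_R)).inf'
        (Finset.nonempty_Icc.mpr (le_min hT (by omega)))
        (fun σ =>
          (τ : ℚ) * (K_T.choose τ) * K_R /
            ((τ : ℚ) * (K_T.choose τ) + ((K_R : ℚ) - σ) * ((σ - 1).choose (τ - 1)))) =
      (τ : ℚ) * (K_T.choose τ) * K_R / ((τ : ℚ) * (K_T.choose τ) + 1) := by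
  have hτ1 : 1 ≤ τ := by omega
  have hC : 1 ≤ K_T.choose τ := Nat.choose_pos hT
  have hCq : (1 : ℚ) ≤ (K_T.choose τ : ℚ) := by exact_mod_cast hC
  have hτq : (1 : ℚ) ≤ (τ : ℚ) := by exact_mod_cast hτ1
  have hD : (0 : ℚ) < (τ : ℚ) * (K_T.choose τ) := by nlinarith
  have hN : (0 : ℚ) ≤ (τ : ℚ) * (K_T.choose τ) * K_R := by positivity
  have hKRτ : ((K_R : ℚ) - τ) = 1 := by
    have h : (τ : ℕ) + 1 = K_R := by omega
    have : ((τ : ℚ) + 1) = (K_R : ℚ) := by exact_mod_cast congrArg (Nat.cast : ℕ → ℚ) h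
    linarith
  have hfτ : (τ : ℚ) * (K_T.choose τ) * K_R /
      ((τ : ℚ) * (K_T.choose τ) + ((K_R : ℚ) - τ) * ((τ - 1).choose (τ - 1))) =
      (τ : ℚ) * (K_T.choose τ) * K_R / ((τ : ℚ) * (K_T.choose τ) + 1) := by
    rw [hKRτ, Nat.choose_self]; norm_num
  apply le_antisymm
  · calc (Finset.Icc τ (min K_T K_R)).inf' _ _ ≤ _ :=
          Finset.inf'_le _ (Finset.mem_Icc.mpr ⟨le_rfl, le_min hT (by omega)⟩)
      _ = _ := hfτ
  · apply Finset.le_inf'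
    intro σ hσ
    rw [Finset.mem_Icc] at hσ
    have hσK : σ ≤ K_R := le_trans hσ.2 (min_le_right _ _)
    rcases eq_or_lt_of_le hσ.1 with h | h
    · rw [← h]; exact hfτ.ge
    · have hσ' : σ = K_R := by omega
      have : ((K_R : ℚ) - σ) = 0 := by rw [hσ']; ring
      rw [this, zero_mul, add_zero]
      gcongr
      linarith
end
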